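/- arXiv:2501.12359 — 3 statements merged into one kernel-verified Lean document; each statement's English description precedes it below -/
import Mathlib

section
/- Let γ ≥ 1, let ρ and σ be states on ℂ^n, and let 𝓜 be a set of measurement operators (each M ∈ 𝓜 satisfies 0 ≤ M ≤ I) whose symmetrized set 𝓜₂ is nonempty. Then (γ + 1) · E_1^𝓜(ρ‖σ) ≤ E_γ^𝓜(ρ‖σ) + E_γ^𝓜(σ‖ρ) + γ − 1. -/
/-!
For `M ∈ 𝓜₂`, testing `E_γ(ρ‖σ)` with `M` and `E_γ(σ‖ρ)` with `I - M` (also in `𝓜₂`) and adding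
the two bounds gives `(γ + 1) Tr[M(ρ - σ)] + 1 - γ ≤ E_γ(ρ‖σ) + E_γ(σ‖ρ)`, because both states
have unit trace; taking the supremum over `M` gives the claim. The suprema are genuine (not the
junk value of an unbounded `sSup`) since `Tr[M(ρ - γσ)] ≤ Tr[Mρ] ≤ Tr ρ = 1`, the traces of
products of positive semidefinite matrices being nonnegative.
-/

noncomputable section
open Matrix ComplexOrder

/-- Square complex matrices of size `n`. -/
abbrev Mat (n : ℕ) := Matrix (Fin n) (Fin n) ℂ

/-- A quantum state: positive semidefinite with unit trace. -/
def IsState {n : ℕ} (ρ : Mat n) : Prop := ρ.PosSemidef ∧ ρ.trace = 1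

/-- The symmetrized measurement set 𝓜₂ := {M ∈ 𝓜 : I − M ∈ 𝓜}. -/
def M2 {n : ℕ} (𝓜 : Set (Mat n)) : Set (Mat n) := {M | M ∈ 𝓜 ∧ (1 - M) ∈ 𝓜}

/-- Measured hockey-stick divergence for γ ≥ 1:
`E_γ^𝓜(ρ‖σ) = sup_{M ∈ 𝓜₂} Tr[M(ρ − γσ)]`. -/
def Emeas {n : ℕ} (γ : ℝ) (𝓜 : Set (Mat n)) (ρ σ : Mat n) : ℝ :=
  sSup ((fun M => ((M * (ρ - (γ : ℂ) • σ)).trace).re) '' M2 𝓜)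

namespace Matrix

variable {ι 𝕜 : Type*} [Fintype ι] [DecidableEq ι] [RCLike 𝕜]

open scoped MatrixOrder in
lemma PosSemidef.trace_mul_nonneg {A B : Matrix ι ι 𝕜} (hA : A.PosSemidef) (hB : B.PosSemidef) :
    0 ≤ (A * B).trace := by
  set S := CFC.sqrt B
  have hS : Sᴴ = S := (CFC.sqrt_nonneg B).posSemidef.isHermitian.eq
  calc 0 ≤ (S * A * S).trace := by
        simpa only [hS] using (hA.conjTranspose_mul_mul_same S).trace_nonneg
    _ = (A * B).trace := by
        rw [mul_assoc, trace_mul_comm, mul_assoc, CFC.sqrt_mul_sqrt_self B hB.nonneg]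

lemma PosSemidef.re_trace_mul_nonneg {A B : Matrix ι ι 𝕜} (hA : A.PosSemidef)
    (hB : B.PosSemidef) : 0 ≤ RCLike.re (A * B).trace :=
  (RCLike.nonneg_iff.mp (hA.trace_mul_nonneg hB)).1

end Matrix

section Emeas

variable {n : ℕ}

lemma re_trace_mul_sub_smul (γ : ℝ) (M ρ σ : Mat n) :
    ((M * (ρ - (γ : ℂ) • σ)).trace).re = ((M * ρ).trace).re - γ * ((M * σ).trace).re := by
  simp [mul_sub, trace_sub]

lemma re_trace_one_sub_mul {σ : Mat n} (hσ : σ.trace = 1) (M : Mat n) :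
    (((1 - M) * σ).trace).re = 1 - ((M * σ).trace).re := by
  simp [sub_mul, trace_sub, hσ]

lemma one_sub_mem_M2 {𝓜 : Set (Mat n)} {M : Mat n} (hM : M ∈ M2 𝓜) : 1 - M ∈ M2 𝓜 :=
  ⟨hM.2, by simpa only [sub_sub_cancel] using hM.1⟩

variable {𝓜 : Set (Mat n)}

lemma bddAbove_image_M2
    (h𝓜 : ∀ M ∈ 𝓜, M.PosSemidef ∧ ((1 : Mat n) - M).PosSemidef)
    {γ : ℝ} (hγ : 0 ≤ γ) {ρ σ : Mat n} (hρ : IsState ρ)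
    (hσ : σ.PosSemidef) :
    BddAbove ((fun M => ((M * (ρ - (γ : ℂ) • σ)).trace).re) '' M2 𝓜) := by
  refine ⟨1, ?_⟩
  rintro _ ⟨M, hM, rfl⟩
  have hρM : 0 ≤ (((1 - M) * ρ).trace).re := (h𝓜 M hM.1).2.re_trace_mul_nonneg hρ.1
  have hMσ : 0 ≤ ((M * σ).trace).re := (h𝓜 M hM.1).1.re_trace_mul_nonneg hσ
  rw [re_trace_one_sub_mul hρ.2] at hρM
  simp only [re_trace_mul_sub_smul]
  linarith [mul_nonneg hγ hMσ]

lemma le_Emeas (h𝓜 : ∀ M ∈ 𝓜, M.PosSemidef ∧ ((1 : Mat n) - M).PosSemidef)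
    {γ : ℝ} (hγ : 0 ≤ γ) {ρ σ : Mat n} (hρ : IsState ρ) (hσ : σ.PosSemidef)
    {M : Mat n} (hM : M ∈ M2 𝓜) : ((M * (ρ - (γ : ℂ) • σ)).trace).re ≤ Emeas γ 𝓜 ρ σ :=
  le_csSup (bddAbove_image_M2 h𝓜 hγ hρ hσ) ⟨M, hM, rfl⟩

lemma add_one_mul_re_trace_le
    (h𝓜 : ∀ M ∈ 𝓜, M.PosSemidef ∧ ((1 : Mat n) - M).PosSemidef)
    {γ : ℝ} (hγ : 0 ≤ γ) {ρ σ : Mat n} (hρ : IsState ρ)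
    (hσ : IsState σ) {M : Mat n} (hM : M ∈ M2 𝓜) :
    (γ + 1) * ((M * (ρ - ((1 : ℝ) : ℂ) • σ)).trace).re
      ≤ Emeas γ 𝓜 ρ σ + Emeas γ 𝓜 σ ρ + γ - 1 := by
  have hρσ := le_Emeas h𝓜 hγ hρ hσ.1 hM
  have hσρ := le_Emeas h𝓜 hγ hσ hρ.1 (one_sub_mem_M2 hM)
  rw [re_trace_mul_sub_smul] at hρσ
  rw [re_trace_mul_sub_smul, re_trace_one_sub_mul hσ.2, re_trace_one_sub_mul hρ.2] at hσρ
  rw [re_trace_mul_sub_smul]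
  linarith

end Emeas

theorem stmt_1 {n : ℕ} (γ : ℝ) (hγ : 1 ≤ γ) (ρ σ : Mat n)
    (hρ : IsState ρ) (hσ : IsState σ) (𝓜 : Set (Mat n))
    (h𝓜 : ∀ M ∈ 𝓜, M.PosSemidef ∧ ((1 : Mat n) - M).PosSemidef)
    (hne : (M2 𝓜).Nonempty) :
    (γ + 1) * Emeas 1 𝓜 ρ σ ≤ Emeas γ 𝓜 ρ σ + Emeas γ 𝓜 σ ρ + γ - 1 := by
  have hγ0 : 0 ≤ γ := zero_le_one.trans hγ
  rw [mul_comm, ← le_div_iff₀ (by linarith)]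
  refine csSup_le (hne.image _) ?_
  rintro _ ⟨M, hM, rfl⟩
  rw [le_div_iff₀ (by linarith), mul_comm]
  exact add_one_mul_re_trace_le h𝓜 hγ0 hρ hσ hM
end
end

section
/- Let γ ≥ 1, let ρ and σ be states on ℂ^n, and let 𝓜 be a set of measurement operators (each M ∈ 𝓜 satisfies 0 ≤ M ≤ I) such that 0 ∈ 𝓜, I ∈ 𝓜, and 𝓜 is closed under coarse-graining: for all M₁, M₂ ∈ 𝓜 with M₁ + M₂ ≤ I one has M₁ + M₂ ∈ 𝓜. Then E_γ^𝓜(ρ‖σ) = Ê_γ^𝓜(ρ‖σ), where Ê_γ^𝓜(ρ‖σ) is the supremum, over all finite POVMs {M_x}_{x ∈ X} (finite families with each M_x ∈ 𝓜, M_x ≥ 0, and Σ_x M_x = I), of Σ_x max{0, Tr[M_x(ρ − γσ)]}. -/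
noncomputable section
open Matrix ComplexOrder

/-- Alternative measured hockey-stick divergence for γ ≥ 1: the supremum over all finite
POVMs `{M_x}` with elements in 𝓜 of `Σ_x max{0, Tr[M_x(ρ − γσ)]}`. -/
def Ehat {n : ℕ} (γ : ℝ) (𝓜 : Set (Mat n)) (ρ σ : Mat n) : ℝ :=
  sSup {s : ℝ | ∃ (k : ℕ) (M : Fin k → Mat n),
    (∀ x, M x ∈ 𝓜) ∧ (∀ x, (M x).PosSemidef) ∧ (∑ x, M x = 1) ∧
    s = ∑ x, max 0 (((M x * (ρ - (γ : ℂ) • σ)).trace).re)}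

/-!
Both suprema run over mutually cofinal subsets of `ℝ`, so they agree (bounded or not). An
effect `N ∈ 𝓜₂` gives the two-outcome POVM `{N, I - N}`, whose classical value dominates
`Tr[NΔ]`. Conversely, coarse-graining the outcomes of a POVM on which `Tr[M_x Δ] ≥ 0` into a
single effect gives an element of `𝓜₂` attaining the classical value of the POVM.
-/

def IsCoarseGrainingClosed {ι : Type*} [Fintype ι] [DecidableEq ι] (𝓜 : Set (Matrix ι ι ℂ)) :
    Prop :=
  ∀ M₁ ∈ 𝓜, ∀ M₂ ∈ 𝓜, (1 - (M₁ + M₂)).PosSemidef → M₁ + M₂ ∈ 𝓜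

theorem Finset.one_sub_sum_eq_sum_compl {κ R : Type*} [Fintype κ] [DecidableEq κ] [Ring R]
    {M : κ → R} (hsum : ∑ x, M x = 1) (S : Finset κ) :
    1 - ∑ x ∈ S, M x = ∑ x ∈ Sᶜ, M x :=
  sub_eq_of_eq_add (hsum ▸ (Finset.sum_compl_add_sum S M).symm)

namespace IsCoarseGrainingClosed

variable {κ : Type*} [Fintype κ]

/-- The complementary partial sum witnesses the bound `≤ I` at each coarse-graining step. -/
theorem sum_mem {ι : Type*} [Fintype ι] [DecidableEq ι] {𝓜 : Set (Matrix ι ι ℂ)}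
    {M : κ → Matrix ι ι ℂ} (h𝓜 : IsCoarseGrainingClosed 𝓜) (h0 : 0 ∈ 𝓜)
    (hmem : ∀ x, M x ∈ 𝓜) (hpsd : ∀ x, (M x).PosSemidef) (hsum : ∑ x, M x = 1)
    (S : Finset κ) :
    ∑ x ∈ S, M x ∈ 𝓜 := by
  classical
  induction S using Finset.induction with
  | empty => simpa using h0
  | insert a S ha ih =>
    rw [Finset.sum_insert ha]
    refine h𝓜 _ (hmem a) _ ih ?_
    rw [← Finset.sum_insert ha, Finset.one_sub_sum_eq_sum_compl hsum]
    exact Matrix.posSemidef_sum _ fun x _ => hpsd x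

variable {n : ℕ} {𝓜 : Set (Mat n)} {M : κ → Mat n}

theorem sum_mem_M2 (h𝓜 : IsCoarseGrainingClosed 𝓜) (h0 : 0 ∈ 𝓜) (hmem : ∀ x, M x ∈ 𝓜)
    (hpsd : ∀ x, (M x).PosSemidef) (hsum : ∑ x, M x = 1) (S : Finset κ) :
    ∑ x ∈ S, M x ∈ M2 𝓜 := by
  classical
  refine ⟨h𝓜.sum_mem h0 hmem hpsd hsum S, ?_⟩
  rw [Finset.one_sub_sum_eq_sum_compl hsum]
  exact h𝓜.sum_mem h0 hmem hpsd hsum Sᶜ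

theorem exists_mem_M2_re_trace_eq_sum_max (h𝓜 : IsCoarseGrainingClosed 𝓜) (h0 : 0 ∈ 𝓜)
    (hmem : ∀ x, M x ∈ 𝓜) (hpsd : ∀ x, (M x).PosSemidef) (hsum : ∑ x, M x = 1)
    (Δ : Mat n) :
    ∃ N ∈ M2 𝓜, (N * Δ).trace.re = ∑ x, max 0 (M x * Δ).trace.re := by
  classical
  refine ⟨_, h𝓜.sum_mem_M2 h0 hmem hpsd hsum {x | 0 ≤ (M x * Δ).trace.re}, ?_⟩
  simp_rw [Finset.sum_mul, Matrix.trace_sum, Complex.re_sum, max_def, Finset.sum_filter]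

end IsCoarseGrainingClosed

theorem re_trace_mul_le_sum_max_binary {ι : Type*} [Fintype ι] [DecidableEq ι]
    (N Δ : Matrix ι ι ℂ) :
    (N * Δ).trace.re ≤ ∑ x, max 0 (![N, 1 - N] x * Δ).trace.re := by
  rw [Fin.sum_univ_two]
  exact le_add_of_le_of_nonneg (le_max_right _ _) (le_max_left _ _)

theorem stmt_2_general {n : ℕ} (γ : ℝ) (ρ σ : Mat n)
    (𝓜 : Set (Mat n))
    (h𝓜 : ∀ M ∈ 𝓜, M.PosSemidef ∧ ((1 : Mat n) - M).PosSemidef)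
    (h0 : (0 : Mat n) ∈ 𝓜)
    (hcoarse : ∀ M₁ ∈ 𝓜, ∀ M₂ ∈ 𝓜, ((1 : Mat n) - (M₁ + M₂)).PosSemidef → M₁ + M₂ ∈ 𝓜) :
    Emeas γ 𝓜 ρ σ = Ehat γ 𝓜 ρ σ := by
  apply csSup_eq_csSup_of_forall_exists_le
  · rintro _ ⟨N, ⟨hN, hN'⟩, rfl⟩
    refine ⟨_, ⟨2, ![N, 1 - N], Fin.forall_fin_two.2 ⟨hN, hN'⟩,
      Fin.forall_fin_two.2 (h𝓜 N hN), by simp [Fin.sum_univ_two], rfl⟩,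
      re_trace_mul_le_sum_max_binary N _⟩
  · rintro _ ⟨k, M, hmem, hpsd, hsum, rfl⟩
    obtain ⟨N, hN, hNval⟩ :=
      IsCoarseGrainingClosed.exists_mem_M2_re_trace_eq_sum_max hcoarse h0 hmem hpsd hsum
        (ρ - (γ : ℂ) • σ)
    exact ⟨_, ⟨N, hN, rfl⟩, hNval.ge⟩

theorem stmt_2 {n : ℕ} (γ : ℝ) (hγ : 1 ≤ γ) (ρ σ : Mat n)
    (hρ : IsState ρ) (hσ : IsState σ) (𝓜 : Set (Mat n))
    (h𝓜 : ∀ M ∈ 𝓜, M.PosSemidef ∧ ((1 : Mat n) - M).PosSemidef)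
    (h0 : (0 : Mat n) ∈ 𝓜) (h1 : (1 : Mat n) ∈ 𝓜)
    (hcoarse : ∀ M₁ ∈ 𝓜, ∀ M₂ ∈ 𝓜, ((1 : Mat n) - (M₁ + M₂)).PosSemidef → M₁ + M₂ ∈ 𝓜) :
    Emeas γ 𝓜 ρ σ = Ehat γ 𝓜 ρ σ :=
  stmt_2_general γ ρ σ 𝓜 h𝓜 h0 hcoarse
end
end

section
/- Let γ ≥ 1 and let Γ^P and Γ^Q be positive semidefinite matrices on ℂ^{d_R} ⊗ ℂ^{d_B} whose partial traces over B equal the identity on R (Choi operators of channels), and set A := Γ^P − γ Γ^Q. Then the following SDP strong duality holds: sup{ Tr[Ω A] : Ω ≥ 0, ρ ≥ 0, Tr[ρ] = 1, Ω ≤ ρ ⊗ I_B, T_B(Ω) ≥ 0, T_B(Ω) ≤ ρ ⊗ I_B } = inf{ μ : μ ≥ 0, ∃ Z, L, Y ≥ 0 with A ≤ Z + T_B(Y − L) and μ·I_R ≥ Tr_B[Z] + Tr_B[Y] } (this common value equals the PPT-measured hockey-stick channel divergence E_γ^PPT(𝒫‖𝒬) of the corresponding channels). -/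
noncomputable section
open Matrix ComplexOrder Kronecker

/-- Matrices on ℂ^{dR} ⊗ ℂ^{dB}, indexed by pairs (r, b). -/
abbrev RBMat (dR dB : ℕ) := Matrix (Fin dR × Fin dB) (Fin dR × Fin dB) ℂ

/-- The partial trace over the system B: `(Tr_B X)(r,r') := Σ_b X((r,b),(r',b))`. -/
def ptrB {dR dB : ℕ} (X : RBMat dR dB) : Matrix (Fin dR) (Fin dR) ℂ :=
  fun r r' => ∑ b : Fin dB, X (r, b) (r', b)

/-- The partial transpose on the system B:
`T_B(M)((r,b),(r',b')) := M((r,b'),(r',b))`. -/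
def ptB {dR dB : ℕ} (M : RBMat dR dB) : RBMat dR dB :=
  fun p q => M (p.1, q.2) (q.1, p.2)

/-!
Weak duality is the sum of five pairings `re tr (P Q) ≥ 0` of positive semidefinite matrices.
For the converse, a number `μ ≥ 0` is a dual value iff `(A, μ • 1)` lies in the image of the cone
of positive semidefinite tuples `(Z, L, Y, W, σ)` under the linear map
`(Z + T_B (Y - L) - W, Tr_B Z + Tr_B Y + σ)`. Taking traces shows that this map vanishes on the
cone only at `0`, so the image is a closed cone and Farkas' lemma applies. If `(A, μ • 1)` were not
in it, the Hermitian part of a separating functional would be an unnormalised primal point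
`(Ω, ρ)` with `re tr (Ω A) > μ re tr ρ`, and normalising `ρ` would give a primal value above `μ`.
So the dual values are exactly the nonnegative upper bounds of the primal values.
-/

open scoped RealInnerProductSpace

namespace Matrix

variable {n 𝕜 : Type*} [Fintype n] [RCLike 𝕜]

open scoped MatrixOrder in
theorem PosSemidef.trace_mul_nonneg_s15 {X Y : Matrix n n 𝕜} (hX : X.PosSemidef)
    (hY : Y.PosSemidef) : 0 ≤ (X * Y).trace := by
  classical
  obtain ⟨a, rfl⟩ := CStarAlgebra.nonneg_iff_eq_star_mul_self.mp hX.nonneg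
  rw [star_eq_conjTranspose, Matrix.mul_assoc, trace_mul_comm]
  exact (hY.mul_mul_conjTranspose_same a).trace_nonneg

theorem PosSemidef.re_trace_mul_nonneg_s15 {X Y : Matrix n n 𝕜} (hX : X.PosSemidef)
    (hY : Y.PosSemidef) : 0 ≤ RCLike.re (X * Y).trace :=
  (RCLike.nonneg_iff.mp (hX.trace_mul_nonneg_s15 hY)).1

theorem trace_vecMulVec_star_mul (v : n → 𝕜) (X : Matrix n n 𝕜) :
    (vecMulVec v (star v) * X).trace = star v ⬝ᵥ X *ᵥ v := by
  rw [trace_mul_comm, mul_vecMulVec, trace_vecMulVec, dotProduct_comm]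

theorem posSemidef_of_forall_re_trace_mul_nonneg {X : Matrix n n 𝕜} (hX : X.IsHermitian)
    (h : ∀ P : Matrix n n 𝕜, P.PosSemidef → 0 ≤ RCLike.re (P * X).trace) : X.PosSemidef := by
  refine .of_dotProduct_mulVec_nonneg hX fun v =>
    RCLike.nonneg_iff.mpr ⟨?_, hX.im_star_dotProduct_mulVec_self v⟩
  simpa [trace_vecMulVec_star_mul] using h _ (posSemidef_vecMulVec_self_star v)

theorem re_trace_mul_conjTranspose {P : Matrix n n 𝕜} (hP : P.IsHermitian) (X : Matrix n n 𝕜) :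
    RCLike.re (P * Xᴴ).trace = RCLike.re (P * X).trace := by
  rw [← hP.eq, ← conjTranspose_mul, trace_conjTranspose, RCLike.star_def, RCLike.conj_re,
    trace_mul_comm, hP.eq]

theorem posSemidef_add_conjTranspose_of_forall_re_trace_mul_nonneg {X : Matrix n n 𝕜}
    (h : ∀ P : Matrix n n 𝕜, P.PosSemidef → 0 ≤ RCLike.re (P * X).trace) :
    (X + Xᴴ).PosSemidef := by
  refine posSemidef_of_forall_re_trace_mul_nonneg (isHermitian_add_transpose_self X) fun P hP => ?_
  rw [Matrix.mul_add, trace_add, map_add, re_trace_mul_conjTranspose hP.1]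
  linarith [h P hP]

theorem isClosed_setOf_posSemidef : IsClosed {M : Matrix n n 𝕜 | M.PosSemidef} := by
  simp only [posSemidef_iff_dotProduct_mulVec, Set.ofPred_and, Set.ofPred_forall]
  exact (isClosed_eq continuous_id.matrix_conjTranspose continuous_id).inter
    (isClosed_iInter fun x => isClosed_le continuous_const
      (continuous_const.dotProduct (continuous_id.matrix_mulVec continuous_const)))

end Matrix

section PartialOperations

variable {dR dB : ℕ}

@[simp] lemma ptB_add (X Y : RBMat dR dB) : ptB (X + Y) = ptB X + ptB Y := rfl

@[simp] lemma ptB_sub (X Y : RBMat dR dB) : ptB (X - Y) = ptB X - ptB Y := rfl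

@[simp] lemma ptB_neg (X : RBMat dR dB) : ptB (-X) = -ptB X := rfl

@[simp] lemma ptB_zero : ptB (0 : RBMat dR dB) = 0 := rfl

lemma ptB_smul {R : Type*} [SMul R ℂ] (c : R) (X : RBMat dR dB) : ptB (c • X) = c • ptB X := rfl

lemma conjTranspose_ptB (X : RBMat dR dB) : (ptB X)ᴴ = ptB Xᴴ := rfl

lemma trace_ptB (X : RBMat dR dB) : (ptB X).trace = X.trace := rfl

lemma trace_ptB_mul (X M : RBMat dR dB) : (ptB X * M).trace = (X * ptB M).trace := by
  let e : Equiv.Perm ((Fin dR × Fin dB) × (Fin dR × Fin dB)) :=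
    Function.Involutive.toPerm (fun x => ((x.1.1, x.2.2), (x.2.1, x.1.2))) fun _ => rfl
  simp only [trace, diag, mul_apply, ← Fintype.sum_prod_type']
  exact Equiv.sum_comp e fun x : (Fin dR × Fin dB) × (Fin dR × Fin dB) => X x.1 x.2 * ptB M x.2 x.1

@[simp] lemma ptrB_add (X Y : RBMat dR dB) : ptrB (X + Y) = ptrB X + ptrB Y := by
  ext; simp [ptrB, Finset.sum_add_distrib]

@[simp] lemma ptrB_zero : ptrB (0 : RBMat dR dB) = 0 := by
  ext; simp [ptrB]

lemma ptrB_smul {R : Type*} [DistribSMul R ℂ] (c : R) (X : RBMat dR dB) :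
    ptrB (c • X) = c • ptrB X := by
  ext; simp [ptrB, Finset.smul_sum]

lemma conjTranspose_ptrB (X : RBMat dR dB) : (ptrB X)ᴴ = ptrB Xᴴ := by
  ext; simp [ptrB]

lemma trace_ptrB (X : RBMat dR dB) : (ptrB X).trace = X.trace := by
  simp [trace, ptrB, Fintype.sum_prod_type]

lemma trace_mul_ptrB (ρ : Matrix (Fin dR) (Fin dR) ℂ) (X : RBMat dR dB) :
    (ρ * ptrB X).trace = ((ρ ⊗ₖ (1 : Matrix (Fin dB) (Fin dB) ℂ)) * X).trace := by
  simp only [trace, diag_apply, mul_apply, ptrB, Finset.mul_sum, Fintype.sum_prod_type]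
  refine Finset.sum_congr rfl fun r _ => ?_
  rw [Finset.sum_comm]
  simp [one_apply]

end PartialOperations

namespace PointedCone

variable {E F : Type*} [NormedAddCommGroup E] [NormedSpace ℝ E] [FiniteDimensional ℝ E]

lemma exists_pos_mul_norm_le [NormedAddCommGroup F] [NormedSpace ℝ F] {C : PointedCone ℝ E}
    (hC : IsClosed (C : Set E)) (f : E →ₗ[ℝ] F) (hf : ∀ x ∈ C, f x = 0 → x = 0) :
    ∃ δ > 0, ∀ x ∈ C, δ * ‖x‖ ≤ ‖f x‖ := by
  set S := (C : Set E) ∩ Metric.sphere 0 1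
  have normalize : ∀ x ∈ C, x ≠ 0 → ‖x‖⁻¹ • x ∈ S := fun x hx hx0 =>
    ⟨C.smul_mem (by positivity) hx, by simp [norm_smul, hx0]⟩
  rcases S.eq_empty_or_nonempty with hS | hS
  · refine ⟨1, one_pos, fun x hx => ?_⟩
    obtain rfl : x = 0 := by_contra fun hx0 => hS.subset (normalize x hx hx0)
    simp
  obtain ⟨z, ⟨hzC, hz1⟩, hmin⟩ := ((isCompact_sphere (0 : E) 1).inter_left hC).exists_isMinOn hS
    (continuous_norm.comp f.continuous_of_finiteDimensional).continuousOn
  refine ⟨‖f z‖, norm_pos_iff.mpr fun h => ?_, fun x hx => ?_⟩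
  · simp [hf z hzC h] at hz1
  rcases eq_or_ne x 0 with rfl | hx0
  · simp
  have hmin_x : ‖f z‖ ≤ ‖f (‖x‖⁻¹ • x)‖ := hmin (normalize x hx hx0)
  rwa [map_smul, norm_smul, norm_inv, norm_norm, le_inv_mul_iff₀ (norm_pos_iff.mpr hx0),
    mul_comm] at hmin_x

lemma isClosed_image [NormedAddCommGroup F] [NormedSpace ℝ F] {C : PointedCone ℝ E}
    (hC : IsClosed (C : Set E)) (f : E →ₗ[ℝ] F) (hf : ∀ x ∈ C, f x = 0 → x = 0) :
    IsClosed (f '' C) := by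
  obtain ⟨δ, hδ, hbound⟩ := C.exists_pos_mul_norm_le hC f hf
  refine IsSeqClosed.isClosed fun {v p} hv hvp => ?_
  choose u huC hfu using hv
  obtain ⟨M, hM⟩ := hvp.cauchySeq.isBounded_range.exists_norm_le
  have hu_bdd : ∀ k, u k ∈ Metric.closedBall (0 : E) (M / δ) := fun k => by
    rw [mem_closedBall_zero_iff, le_div_iff₀' hδ]
    exact (hbound _ (huC k)).trans (hfu k ▸ hM _ ⟨k, rfl⟩)
  obtain ⟨l, -, φ, hφ, hl⟩ := tendsto_subseq_of_bounded Metric.isBounded_closedBall hu_bdd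
  have hfl : Filter.Tendsto (f ∘ u ∘ φ) Filter.atTop (nhds (f l)) :=
    (f.continuous_of_finiteDimensional.tendsto l).comp hl
  have hp : Filter.Tendsto (f ∘ u ∘ φ) Filter.atTop (nhds p) := by
    simpa [Function.comp_def, hfu] using hvp.comp hφ.tendsto_atTop
  exact ⟨l, hC.mem_of_tendsto hl (.of_forall fun k => huC _), tendsto_nhds_unique hfl hp⟩

theorem mem_image_of_forall_inner_nonneg [NormedAddCommGroup F] [InnerProductSpace ℝ F]
    [CompleteSpace F] {C : PointedCone ℝ E} (hC : IsClosed (C : Set E)) (f : E →ₗ[ℝ] F)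
    (hf : ∀ x ∈ C, f x = 0 → x = 0) {b : F}
    (hb : ∀ y, (∀ x ∈ C, 0 ≤ ⟪f x, y⟫) → 0 ≤ ⟪b, y⟫) : b ∈ f '' C := by
  by_contra hbC
  let K : ProperCone ℝ F := ⟨C.map f, C.isClosed_image hC f hf⟩
  obtain ⟨y, hy, hyb⟩ := K.hyperplane_separation' (x₀ := b) hbC
  exact hyb.not_ge (hb y fun x hx => hy _ ⟨x, hx, rfl⟩)

end PointedCone

section HilbertSchmidt

variable {ι : Type*}

/-- Hilbert–Schmidt coordinates of a matrix. -/
def toHS : Matrix ι ι ℂ ≃ₗ[ℝ] EuclideanSpace ℂ (ι × ι) where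
  toFun X := WithLp.toLp 2 fun p => X p.1 p.2
  invFun v := Matrix.of fun i j => v (i, j)
  map_add' _ _ := rfl
  map_smul' _ _ := rfl
  left_inv _ := rfl
  right_inv _ := rfl

@[simp] lemma toHS_apply (X : Matrix ι ι ℂ) (p : ι × ι) : toHS X p = X p.1 p.2 := rfl

variable (ι) in
def psdCone : PointedCone ℝ (EuclideanSpace ℂ (ι × ι)) where
  carrier := {v | (toHS.symm v).PosSemidef}
  add_mem' hv hw := by simpa using hv.add hw
  zero_mem' := by simpa using PosSemidef.zero
  smul_mem' c v hv := by
    change (toHS.symm ((c : ℝ) • v)).PosSemidef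
    rw [map_smul]
    exact hv.smul c.2

lemma mem_psdCone {v : EuclideanSpace ℂ (ι × ι)} : v ∈ psdCone ι ↔ (toHS.symm v).PosSemidef :=
  Iff.rfl

variable [Fintype ι]

lemma inner_toHS (X Y : Matrix ι ι ℂ) : ⟪toHS X, toHS Y⟫ = (Xᴴ * Y).trace.re := by
  rw [PiLp.inner_apply, Fintype.sum_prod_type, Finset.sum_comm]
  simp [trace, mul_apply, mul_comm]

lemma isClosed_psdCone : IsClosed (psdCone ι : Set (EuclideanSpace ℂ (ι × ι))) :=
  isClosed_setOf_posSemidef.preimage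
    (LinearMap.continuous_of_finiteDimensional toHS.symm.toLinearMap)

end HilbertSchmidt

namespace PPTSDP

variable {dR dB : ℕ}

def primalValues (A : RBMat dR dB) : Set ℝ :=
  {x | ∃ (Ω : RBMat dR dB) (ρ : Matrix (Fin dR) (Fin dR) ℂ),
    Ω.PosSemidef ∧ ρ.PosSemidef ∧ ρ.trace = 1 ∧
    ((ρ ⊗ₖ (1 : Matrix (Fin dB) (Fin dB) ℂ)) - Ω).PosSemidef ∧
    (ptB Ω).PosSemidef ∧
    ((ρ ⊗ₖ (1 : Matrix (Fin dB) (Fin dB) ℂ)) - ptB Ω).PosSemidef ∧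
    x = ((Ω * A).trace).re}

def dualValues (A : RBMat dR dB) : Set ℝ :=
  {μ | 0 ≤ μ ∧ ∃ Z L Y : RBMat dR dB,
    Z.PosSemidef ∧ L.PosSemidef ∧ Y.PosSemidef ∧
    ((Z + ptB (Y - L)) - A).PosSemidef ∧
    ((μ : ℂ) • (1 : Matrix (Fin dR) (Fin dR) ℂ) - (ptrB Z + ptrB Y)).PosSemidef}

lemma zero_mem_primalValues {A : RBMat dR dB} (h : (primalValues A).Nonempty) :
    0 ∈ primalValues A := by
  obtain ⟨-, Ω, ρ, -, hρ, htr, -⟩ := h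
  have hρ1 : (ρ ⊗ₖ (1 : Matrix (Fin dB) (Fin dB) ℂ)).PosSemidef := hρ.kronecker .one
  exact ⟨0, ρ, .zero, hρ, htr, by simpa using hρ1, .zero, by simpa using hρ1, by simp⟩

theorem le_of_mem_primalValues_of_mem_dualValues {A : RBMat dR dB} {x μ : ℝ}
    (hx : x ∈ primalValues A) (hμ : μ ∈ dualValues A) : x ≤ μ := by
  obtain ⟨Ω, ρ, hΩ, hρ, hρtr, h₁, h₂, h₃, rfl⟩ := hx
  obtain ⟨-, Z, L, Y, hZ, hL, hY, hA, hμ⟩ := hμ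
  have e₁ := hΩ.re_trace_mul_nonneg_s15 hA
  have e₂ := hZ.re_trace_mul_nonneg_s15 h₁
  have e₃ := h₂.re_trace_mul_nonneg_s15 hL
  have e₄ := hY.re_trace_mul_nonneg_s15 h₃
  have e₅ := hρ.re_trace_mul_nonneg_s15 hμ
  simp only [Matrix.mul_add, Matrix.mul_sub, Matrix.mul_smul, Matrix.mul_one, ptB_sub, trace_add,
    trace_sub, trace_smul, hρtr, map_add, map_sub, RCLike.re_to_complex] at e₁ e₂ e₃ e₄ e₅
  rw [← trace_ptB_mul, ← trace_ptB_mul, trace_mul_comm Ω Z] at e₁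
  rw [trace_mul_comm Z, ← trace_mul_ptrB] at e₂
  rw [trace_mul_comm Y, ← trace_mul_ptrB, trace_mul_comm Y] at e₄
  rw [smul_eq_mul, mul_one, Complex.ofReal_re] at e₅
  linarith

def IsUnnormalizedPrimal (Ω : RBMat dR dB) (ρ : Matrix (Fin dR) (Fin dR) ℂ) : Prop :=
  Ω.PosSemidef ∧ ρ.PosSemidef ∧ ((ρ ⊗ₖ (1 : Matrix (Fin dB) (Fin dB) ℂ)) - Ω).PosSemidef ∧
    (ptB Ω).PosSemidef ∧ ((ρ ⊗ₖ (1 : Matrix (Fin dB) (Fin dB) ℂ)) - ptB Ω).PosSemidef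

lemma re_trace_mul_le_of_forall_le {A : RBMat dR dB} {μ : ℝ}
    (hμ : ∀ x ∈ primalValues A, x ≤ μ) {Ω : RBMat dR dB} {ρ : Matrix (Fin dR) (Fin dR) ℂ}
    (h : IsUnnormalizedPrimal Ω ρ) : (Ω * A).trace.re ≤ μ * ρ.trace.re := by
  obtain ⟨hΩ, hρ, h₁, h₂, h₃⟩ := h
  rcases hρ.trace_nonneg.eq_or_lt with hzero | hpos
  · obtain rfl : ρ = 0 := hρ.trace_eq_zero_iff.1 hzero.symm
    have : Ω = 0 :=
      hΩ.trace_eq_zero_iff.1 (le_antisymm (by simpa using h₁.trace_nonneg) hΩ.trace_nonneg)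
    simp [this]
  set t := ρ.trace.re
  have ht : 0 < t := (Complex.lt_def.1 hpos).1
  have htr : ρ.trace = t := Complex.ext rfl (Complex.lt_def.1 hpos).2.symm
  have hmem : t⁻¹ * (Ω * A).trace.re ∈ primalValues A := by
    refine ⟨t⁻¹ • Ω, t⁻¹ • ρ, hΩ.smul (by positivity), hρ.smul (by positivity), ?_, ?_, ?_, ?_, ?_⟩
    · rw [trace_smul, htr, Complex.real_smul, ← Complex.ofReal_mul, inv_mul_cancel₀ ht.ne',
        Complex.ofReal_one]
    · simpa [smul_kronecker, ← smul_sub] using h₁.smul (inv_nonneg.2 ht.le)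
    · simpa [ptB_smul] using h₂.smul (inv_nonneg.2 ht.le)
    · simpa [smul_kronecker, ptB_smul, ← smul_sub] using h₃.smul (inv_nonneg.2 ht.le)
    · simp [trace_smul, Complex.real_smul]
  exact (inv_mul_le_iff₀ ht).1 (hμ _ hmem) |>.trans_eq (mul_comm _ _)

variable (dR dB) in
/-- Hilbert–Schmidt coordinates of `(Z, L, Y, W, σ)`: the dual variables together with the slacks
`W`, `σ` of the two dual constraints. -/
abbrev DualVars :=
  EuclideanSpace ℂ ((Fin dR × Fin dB) × (Fin dR × Fin dB)) ×
  EuclideanSpace ℂ ((Fin dR × Fin dB) × (Fin dR × Fin dB)) ×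
  EuclideanSpace ℂ ((Fin dR × Fin dB) × (Fin dR × Fin dB)) ×
  EuclideanSpace ℂ ((Fin dR × Fin dB) × (Fin dR × Fin dB)) ×
  EuclideanSpace ℂ (Fin dR × Fin dR)

variable (dR dB) in
abbrev ConstraintSpace :=
  WithLp 2 (EuclideanSpace ℂ ((Fin dR × Fin dB) × (Fin dR × Fin dB)) ×
    EuclideanSpace ℂ (Fin dR × Fin dR))

variable (dR dB) in
def dualCone : PointedCone ℝ (DualVars dR dB) :=
  (psdCone _).prod ((psdCone _).prod ((psdCone _).prod ((psdCone _).prod (psdCone _))))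

lemma isClosed_dualCone : IsClosed (dualCone dR dB : Set (DualVars dR dB)) :=
  isClosed_psdCone.prod (isClosed_psdCone.prod (isClosed_psdCone.prod
    (isClosed_psdCone.prod isClosed_psdCone)))

def dualMap : DualVars dR dB →ₗ[ℝ] ConstraintSpace dR dB where
  toFun x := WithLp.toLp 2
    (toHS (toHS.symm x.1 + ptB (toHS.symm x.2.2.1 - toHS.symm x.2.1) - toHS.symm x.2.2.2.1),
     toHS (ptrB (toHS.symm x.1) + ptrB (toHS.symm x.2.2.1) + toHS.symm x.2.2.2.2))
  map_add' x y := by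
    simp only [Prod.fst_add, Prod.snd_add, map_add, map_sub, ptB_add, ptrB_add, ptB_sub,
      ← WithLp.toLp_add, Prod.mk_add_mk]
    congr 2 <;> abel
  map_smul' c x := by
    simp only [Prod.smul_fst, Prod.smul_snd, map_smul, map_add, map_sub, ptB_sub, ptB_smul,
      ptrB_smul, RingHom.id_apply, ← WithLp.toLp_smul, Prod.smul_mk, smul_add, smul_sub]

lemma dualMap_toHS (Z L Y W : RBMat dR dB) (σ : Matrix (Fin dR) (Fin dR) ℂ) :
    dualMap (toHS Z, toHS L, toHS Y, toHS W, toHS σ) =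
      WithLp.toLp 2 (toHS (Z + ptB (Y - L) - W), toHS (ptrB Z + ptrB Y + σ)) := by
  simp [dualMap]

lemma toHS_mem_dualCone {Z L Y W : RBMat dR dB} {σ : Matrix (Fin dR) (Fin dR) ℂ} :
    (toHS Z, toHS L, toHS Y, toHS W, toHS σ) ∈ dualCone dR dB ↔
      Z.PosSemidef ∧ L.PosSemidef ∧ Y.PosSemidef ∧ W.PosSemidef ∧ σ.PosSemidef := by
  simp [dualCone, Submodule.mem_prod, mem_psdCone]

lemma inner_dualMap_toHS (Z L Y W N : RBMat dR dB) (σ ρ : Matrix (Fin dR) (Fin dR) ℂ) :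
    ⟪dualMap (toHS Z, toHS L, toHS Y, toHS W, toHS σ), WithLp.toLp 2 (toHS N, toHS ρ)⟫ =
      (Zᴴ * (N + ρ ⊗ₖ 1)).trace.re - (Lᴴ * ptB N).trace.re +
        (Yᴴ * (ptB N + ρ ⊗ₖ 1)).trace.re - (Wᴴ * N).trace.re + (σᴴ * ρ).trace.re := by
  rw [dualMap_toHS, WithLp.prod_inner_apply, inner_toHS, inner_toHS]
  simp only [conjTranspose_add, conjTranspose_sub, conjTranspose_ptB, conjTranspose_ptrB,
    Matrix.add_mul, Matrix.sub_mul, Matrix.mul_add, trace_add, trace_sub, Complex.add_re,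
    Complex.sub_re, trace_ptB_mul]
  rw [trace_mul_comm (ptrB Zᴴ), trace_mul_ptrB, trace_mul_comm (ptrB Yᴴ), trace_mul_ptrB,
    trace_mul_comm _ Zᴴ, trace_mul_comm _ Yᴴ]
  ring

lemma eq_zero_of_dualMap_eq_zero {x : DualVars dR dB} (hx : x ∈ dualCone dR dB)
    (h0 : dualMap x = 0) : x = 0 := by
  obtain ⟨z, l, y, w, s⟩ := x
  obtain ⟨Z, rfl⟩ := toHS.surjective z
  obtain ⟨L, rfl⟩ := toHS.surjective l
  obtain ⟨Y, rfl⟩ := toHS.surjective y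
  obtain ⟨W, rfl⟩ := toHS.surjective w
  obtain ⟨σ, rfl⟩ := toHS.surjective s
  obtain ⟨hZ, hL, hY, hW, hσ⟩ := toHS_mem_dualCone.1 hx
  simp only [dualMap_toHS, WithLp.toLp_eq_zero, Prod.mk_eq_zero,
    LinearEquiv.map_eq_zero_iff] at h0
  have hRtr : (Z.trace + Y.trace) + σ.trace = 0 := by
    rw [← trace_ptrB Z, ← trace_ptrB Y, ← trace_add, ← trace_add, h0.2, trace_zero]
  obtain ⟨⟨hZtr, hYtr⟩, hσtr⟩ : (Z.trace = 0 ∧ Y.trace = 0) ∧ σ.trace = 0 := by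
    rwa [add_eq_zero_iff_of_nonneg (add_nonneg hZ.trace_nonneg hY.trace_nonneg) hσ.trace_nonneg,
      add_eq_zero_iff_of_nonneg hZ.trace_nonneg hY.trace_nonneg] at hRtr
  obtain rfl := hZ.trace_eq_zero_iff.1 hZtr
  obtain rfl := hY.trace_eq_zero_iff.1 hYtr
  have hRBtr : W.trace + L.trace = 0 := by
    simpa [trace_ptB] using congrArg (-trace ·) h0.1
  obtain ⟨hWtr, hLtr⟩ := (add_eq_zero_iff_of_nonneg hW.trace_nonneg hL.trace_nonneg).1 hRBtr
  simp [hL.trace_eq_zero_iff.1 hLtr, hW.trace_eq_zero_iff.1 hWtr, hσ.trace_eq_zero_iff.1 hσtr]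

lemma isUnnormalizedPrimal_of_forall_inner_dualMap_nonneg {N : RBMat dR dB}
    {ρ : Matrix (Fin dR) (Fin dR) ℂ}
    (hy : ∀ x ∈ dualCone dR dB, 0 ≤ ⟪dualMap x, WithLp.toLp 2 (toHS N, toHS ρ)⟫) :
    IsUnnormalizedPrimal (-(N + Nᴴ)) (ρ + ρᴴ) := by
  have hpair {Z L Y W σ} (hZ : Z.PosSemidef) (hL : L.PosSemidef) (hY : Y.PosSemidef)
      (hW : W.PosSemidef) (hσ : σ.PosSemidef) :=
    inner_dualMap_toHS Z L Y W N σ ρ ▸ hy _ (toHS_mem_dualCone.2 ⟨hZ, hL, hY, hW, hσ⟩)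
  -- Testing one slot at a time: each slot of the adjoint of `dualMap` has PSD Hermitian part.
  have h₁ := posSemidef_add_conjTranspose_of_forall_re_trace_mul_nonneg (X := N + ρ ⊗ₖ 1)
    fun P hP => by simpa [hP.1.eq] using hpair hP .zero .zero .zero .zero
  have h₂ := posSemidef_add_conjTranspose_of_forall_re_trace_mul_nonneg (X := -ptB N)
    fun P hP => by simpa [hP.1.eq] using hpair .zero hP .zero .zero .zero
  have h₃ := posSemidef_add_conjTranspose_of_forall_re_trace_mul_nonneg (X := ptB N + ρ ⊗ₖ 1)
    fun P hP => by simpa [hP.1.eq] using hpair .zero .zero hP .zero .zero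
  have h₄ := posSemidef_add_conjTranspose_of_forall_re_trace_mul_nonneg (X := -N)
    fun P hP => by simpa [hP.1.eq] using hpair .zero .zero .zero hP .zero
  have h₅ := posSemidef_add_conjTranspose_of_forall_re_trace_mul_nonneg (X := ρ)
    fun P hP => by simpa [hP.1.eq] using hpair .zero .zero .zero .zero hP
  have hkron : (ρ ⊗ₖ (1 : Matrix (Fin dB) (Fin dB) ℂ))ᴴ = ρᴴ ⊗ₖ 1 := by
    rw [conjTranspose_kronecker, conjTranspose_one]
  refine ⟨?_, h₅, ?_, ?_, ?_⟩
  · rwa [show -(N + Nᴴ) = -N + (-N)ᴴ by rw [conjTranspose_neg]; abel]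
  · rwa [show (ρ + ρᴴ) ⊗ₖ 1 - -(N + Nᴴ) = N + ρ ⊗ₖ 1 + (N + ρ ⊗ₖ 1)ᴴ by
      rw [conjTranspose_add, hkron, add_kronecker]; abel]
  · rwa [show ptB (-(N + Nᴴ)) = -ptB N + (-ptB N)ᴴ by
      rw [conjTranspose_neg, conjTranspose_ptB, ptB_neg, ptB_add]; abel]
  · rwa [show (ρ + ρᴴ) ⊗ₖ 1 - ptB (-(N + Nᴴ)) = ptB N + ρ ⊗ₖ 1 + (ptB N + ρ ⊗ₖ 1)ᴴ by
      rw [conjTranspose_add, hkron, add_kronecker, conjTranspose_ptB, ptB_neg, ptB_add]; abel]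

lemma inner_nonneg_of_forall_le {A : RBMat dR dB} (hA : A.IsHermitian) {μ : ℝ}
    (hμ : ∀ x ∈ primalValues A, x ≤ μ) (y : ConstraintSpace dR dB)
    (hy : ∀ x ∈ dualCone dR dB, 0 ≤ ⟪dualMap x, y⟫) :
    0 ≤ ⟪WithLp.toLp 2 (toHS A, toHS ((μ : ℂ) • (1 : Matrix (Fin dR) (Fin dR) ℂ))), y⟫ := by
  obtain ⟨⟨n, r⟩⟩ := y
  obtain ⟨N, rfl⟩ := toHS.surjective n
  obtain ⟨ρ, rfl⟩ := toHS.surjective r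
  have key := re_trace_mul_le_of_forall_le hμ
    (isUnnormalizedPrimal_of_forall_inner_dualMap_nonneg hy)
  have hΩA : (-(N + Nᴴ) * A).trace.re = -2 * (A * N).trace.re := by
    have := re_trace_mul_conjTranspose hA N
    rw [RCLike.re_to_complex, RCLike.re_to_complex] at this
    rw [Matrix.neg_mul, Matrix.add_mul, trace_neg, trace_add, trace_mul_comm N,
      trace_mul_comm Nᴴ, Complex.neg_re, Complex.add_re, this]
    ring
  have hρ : (ρ + ρᴴ).trace.re = 2 * ρ.trace.re := by
    simp only [trace_add, trace_conjTranspose, RCLike.star_def, Complex.add_re, Complex.conj_re]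
    ring
  rw [hΩA, hρ] at key
  simp only [WithLp.prod_inner_apply, inner_toHS, hA.eq, conjTranspose_smul, conjTranspose_one,
    Matrix.smul_mul, Matrix.one_mul, trace_smul, smul_eq_mul, Complex.star_def,
    Complex.conj_ofReal, Complex.re_ofReal_mul]
  linarith

theorem mem_dualValues_of_forall_le {A : RBMat dR dB} (hA : A.IsHermitian) {μ : ℝ}
    (hμ₀ : 0 ≤ μ) (hμ : ∀ x ∈ primalValues A, x ≤ μ) : μ ∈ dualValues A := by
  obtain ⟨⟨z, l, y, w, s⟩, hx, hfx⟩ := (dualCone dR dB).mem_image_of_forall_inner_nonneg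
    isClosed_dualCone dualMap (fun _ hx => eq_zero_of_dualMap_eq_zero hx)
    (inner_nonneg_of_forall_le hA hμ)
  obtain ⟨Z, rfl⟩ := toHS.surjective z
  obtain ⟨L, rfl⟩ := toHS.surjective l
  obtain ⟨Y, rfl⟩ := toHS.surjective y
  obtain ⟨W, rfl⟩ := toHS.surjective w
  obtain ⟨σ, rfl⟩ := toHS.surjective s
  obtain ⟨hZ, hL, hY, hW, hσ⟩ := toHS_mem_dualCone.1 hx
  simp only [dualMap_toHS, WithLp.toLp.injEq, Prod.mk.injEq, toHS.injective.eq_iff] at hfx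
  refine ⟨hμ₀, Z, L, Y, hZ, hL, hY, ?_, ?_⟩
  · rwa [← hfx.1, sub_sub_cancel]
  · rwa [← hfx.2, add_sub_cancel_left]

theorem dualValues_eq {A : RBMat dR dB} (hA : A.IsHermitian) :
    dualValues A = Set.Ici 0 ∩ upperBounds (primalValues A) :=
  Set.ext fun _ => ⟨fun hμ => ⟨hμ.1, fun _ hx => le_of_mem_primalValues_of_mem_dualValues hx hμ⟩,
    fun hμ => mem_dualValues_of_forall_le hA hμ.1 hμ.2⟩

theorem sSup_primalValues_eq_sInf_dualValues {A : RBMat dR dB} (hA : A.IsHermitian)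
    (hfeas : (dualValues A).Nonempty) : sSup (primalValues A) = sInf (dualValues A) := by
  rw [dualValues_eq hA] at hfeas ⊢
  rcases (primalValues A).eq_empty_or_nonempty with hP | hP
  -- Empty primal (only when `dR = 0`): both sides are `0` as `sSup ∅ = 0 = sInf (Ici 0)`.
  · simp [hP]
  obtain ⟨μ, -, hμ⟩ := hfeas
  have hnonneg : upperBounds (primalValues A) ⊆ Set.Ici 0 := fun _ hx =>
    hx (zero_mem_primalValues hP)
  rw [Set.inter_eq_right.2 hnonneg, csInf_upperBounds_eq_csSup ⟨μ, hμ⟩ hP]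

end PPTSDP

theorem stmt_15_general {dR dB : ℕ} (γ : ℝ) (hγ : 1 ≤ γ)
    (ΓP ΓQ : RBMat dR dB) (hP : ΓP.PosSemidef) (hQ : ΓQ.PosSemidef)
    (hPtr : ptrB ΓP = 1) :
    sSup {x : ℝ | ∃ (Ω : RBMat dR dB) (ρ : Matrix (Fin dR) (Fin dR) ℂ),
        Ω.PosSemidef ∧ ρ.PosSemidef ∧ ρ.trace = 1 ∧
        ((ρ ⊗ₖ (1 : Matrix (Fin dB) (Fin dB) ℂ)) - Ω).PosSemidef ∧
        (ptB Ω).PosSemidef ∧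
        ((ρ ⊗ₖ (1 : Matrix (Fin dB) (Fin dB) ℂ)) - ptB Ω).PosSemidef ∧
        x = ((Ω * (ΓP - (γ : ℂ) • ΓQ)).trace).re} =
    sInf {μ : ℝ | 0 ≤ μ ∧ ∃ Z L Y : RBMat dR dB,
        Z.PosSemidef ∧ L.PosSemidef ∧ Y.PosSemidef ∧
        ((Z + ptB (Y - L)) - (ΓP - (γ : ℂ) • ΓQ)).PosSemidef ∧
        ((μ : ℂ) • (1 : Matrix (Fin dR) (Fin dR) ℂ) - (ptrB Z + ptrB Y)).PosSemidef} := by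
  have hγQ : ((γ : ℂ) • ΓQ).PosSemidef := by
    simpa [Complex.coe_smul] using hQ.smul (zero_le_one.trans hγ)
  refine PPTSDP.sSup_primalValues_eq_sInf_dualValues (hP.1.sub hγQ.1)
    ⟨1, zero_le_one, ΓP, 0, 0, hP, .zero, .zero, ?_, ?_⟩
  · simpa using hγQ
  · simpa [hPtr] using PosSemidef.zero

/-- SDP strong duality for the PPT-measured hockey-stick channel divergence,
expressed in terms of the Choi operators `Γ^P` and `Γ^Q` via `A := Γ^P − γΓ^Q`. -/
theorem stmt_15 {dR dB : ℕ} (γ : ℝ) (hγ : 1 ≤ γ)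
    (ΓP ΓQ : RBMat dR dB) (hP : ΓP.PosSemidef) (hQ : ΓQ.PosSemidef)
    (hPtr : ptrB ΓP = 1) (hQtr : ptrB ΓQ = 1) :
    sSup {x : ℝ | ∃ (Ω : RBMat dR dB) (ρ : Matrix (Fin dR) (Fin dR) ℂ),
        Ω.PosSemidef ∧ ρ.PosSemidef ∧ ρ.trace = 1 ∧
        ((ρ ⊗ₖ (1 : Matrix (Fin dB) (Fin dB) ℂ)) - Ω).PosSemidef ∧
        (ptB Ω).PosSemidef ∧
        ((ρ ⊗ₖ (1 : Matrix (Fin dB) (Fin dB) ℂ)) - ptB Ω).PosSemidef ∧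
        x = ((Ω * (ΓP - (γ : ℂ) • ΓQ)).trace).re} =
    sInf {μ : ℝ | 0 ≤ μ ∧ ∃ Z L Y : RBMat dR dB,
        Z.PosSemidef ∧ L.PosSemidef ∧ Y.PosSemidef ∧
        ((Z + ptB (Y - L)) - (ΓP - (γ : ℂ) • ΓQ)).PosSemidef ∧
        ((μ : ℂ) • (1 : Matrix (Fin dR) (Fin dR) ℂ) - (ptrB Z + ptrB Y)).PosSemidef} :=
  stmt_15_general γ hγ ΓP ΓQ hP hQ hPtr
end
end
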